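/- arXiv:1505.07404 — 4 statements merged into one kernel-verified Lean document; each statement's English description precedes it below -/
import Mathlib

section
/- Let p be a real number with 1 ≤ p. Let φ(z) = λ₁(z − a₁)/(1 − conj(a₁)·z) and ψ(z) = λ₂(z − a₂)/(1 − conj(a₂)·z) be automorphisms of D (a₁, a₂ ∈ D, |λ₁| = |λ₂| = 1), and suppose ψ ∘ φ is written as (ψ ∘ φ)(z) = λ₃(z − a₃)/(1 − conj(a₃)·z) with a₃ ∈ D and |λ₃| = 1. Then there exists ρ ∈ ℂ with |ρ| = 1 such that for all z ∈ D: (conj(λ₁)·φ'(z))^(1/p) · (conj(λ₂)·ψ'(φ(z)))^(1/p) = ρ · (conj(λ₃)·(ψ ∘ φ)'(z))^(1/p), where w^(1/p) denotes the principal branch of the complex power (as in Complex.cpow). -/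
/-!
For a disc automorphism `φ = discAut a λ`, the normalised derivative `conj λ * φ' z` equals
`(1 - ‖a‖²) / (1 - conj a * z)²`, a positive multiple of the square of a number with positive real
part, so it lies in the slit plane where the principal branches are continuous. By the chain rule
the three normalised derivatives satisfy `A z * B z = c * C z` with the unimodular constant
`c = conj λ₁ * conj λ₂ * λ₃`. Hence `L = log A + log B - log C` is a continuous function on the
connected disc with values in `log c + 2πiℤ`, so it is constant, and `ρ = exp (L / p)` works.
-/

open Complex ComplexConjugate Metric Set

theorem IsPreconnected.constant_of_exp_eq {α : Type*} [TopologicalSpace α] {S : Set α}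
    (hS : IsPreconnected S) {L : α → ℂ} (hL : ContinuousOn L S) {c : ℂ}
    (hexp : ∀ z ∈ S, exp (L z) = c) {x y : α} (hx : x ∈ S) (hy : y ∈ S) : L x = L y := by
  have hmaps : MapsTo (fun z => L z - L x) S (AddSubgroup.zmultiples (2 * Real.pi * I)) := by
    intro z hz
    obtain ⟨n, hn⟩ := exp_eq_exp_iff_exists_int.mp ((hexp z hz).trans (hexp x hx).symm)
    exact ⟨n, by simp [hn]⟩
  have hdiscrete : IsDiscrete (AddSubgroup.zmultiples (2 * Real.pi * I) : Set ℂ) :=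
    isDiscrete_iff_discreteTopology.mpr (NormedSpace.discreteTopology_zmultiples _)
  have := hS.constant_of_mapsTo hdiscrete (hL.sub continuousOn_const) hmaps hx hy
  simpa [eq_comm, sub_eq_zero] using this

theorem IsPreconnected.exists_cpow_mul_cpow_eq_mul_cpow {α : Type*} [TopologicalSpace α]
    {S : Set α} (hS : IsPreconnected S) {f g h : α → ℂ} (hf : ContinuousOn f S)
    (hg : ContinuousOn g S) (hh : ContinuousOn h S) (hfS : MapsTo f S slitPlane)
    (hgS : MapsTo g S slitPlane) (hhS : MapsTo h S slitPlane) {c : ℂ}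
    (hfgh : ∀ z ∈ S, f z * g z = c * h z) (t : ℝ) :
    ∃ ρ : ℂ, ‖ρ‖ = ‖c‖ ^ t ∧ ∀ z ∈ S, f z ^ (t : ℂ) * g z ^ (t : ℂ) = ρ * h z ^ (t : ℂ) := by
  rcases S.eq_empty_or_nonempty with rfl | ⟨x, hx⟩
  · exact ⟨(‖c‖ ^ t : ℝ), by simp [Real.abs_rpow_of_nonneg], by simp⟩
  set L : α → ℂ := fun z => log (f z) + log (g z) - log (h z)
  have hexpL : ∀ z ∈ S, exp (L z) = c := fun z hz => by
    have hh0 := slitPlane_ne_zero (hhS hz)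
    simp only [L, exp_sub, exp_add, exp_log (slitPlane_ne_zero (hfS hz)),
      exp_log (slitPlane_ne_zero (hgS hz)), exp_log hh0, hfgh z hz, mul_div_cancel_right₀ _ hh0]
  have hLc : ContinuousOn L S :=
    ((hf.clog hfS).add (hg.clog hgS)).sub (hh.clog hhS)
  refine ⟨exp (L x * t), ?_, fun z hz => ?_⟩
  · rw [norm_exp, ← hexpL x hx, norm_exp, Real.rpow_def_of_pos (Real.exp_pos _), Real.log_exp]
    simp [mul_comm]
  · rw [cpow_def_of_ne_zero (slitPlane_ne_zero (hfS hz)),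
      cpow_def_of_ne_zero (slitPlane_ne_zero (hgS hz)),
      cpow_def_of_ne_zero (slitPlane_ne_zero (hhS hz)), ← exp_add, ← exp_add,
      ← hS.constant_of_exp_eq hLc hexpL hz hx]
    simp only [L]
    ring_nf

theorem Complex.re_one_sub_pos {w : ℂ} (hw : ‖w‖ < 1) : 0 < (1 - w).re := by
  have := (re_le_norm w).trans_lt hw
  simp only [sub_re, one_re]
  linarith

theorem Complex.ofReal_mul_sq_mem_slitPlane {r : ℝ} (hr : 0 < r) {w : ℂ} (hw : 0 < w.re) :
    (r : ℂ) * w ^ 2 ∈ slitPlane := by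
  rw [mem_slitPlane_iff]
  by_cases him : w.im = 0
  · left
    simp only [pow_two, mul_re, mul_im, ofReal_re, ofReal_im, him]
    nlinarith [mul_pos hr (mul_pos hw hw)]
  · right
    simp only [pow_two, mul_im, mul_re, ofReal_re, ofReal_im]
    ring_nf
    exact mul_ne_zero (mul_ne_zero (mul_ne_zero hr.ne' hw.ne') him) two_ne_zero

noncomputable def discAut (a lam z : ℂ) : ℂ := lam * (z - a) / (1 - conj a * z)

noncomputable def discAutDeriv (a z : ℂ) : ℂ :=
  ((1 - ‖a‖ ^ 2 : ℝ) : ℂ) * ((1 - conj a * z)⁻¹) ^ 2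

section discAut

variable {a lam z : ℂ}

theorem norm_conj_mul_lt_one (ha : ‖a‖ < 1) (hz : ‖z‖ < 1) : ‖conj a * z‖ < 1 := by
  rw [norm_mul, norm_conj]
  nlinarith [norm_nonneg a, norm_nonneg z]

theorem one_sub_conj_mul_ne_zero (ha : ‖a‖ < 1) (hz : ‖z‖ < 1) : 1 - conj a * z ≠ 0 :=
  fun h => (re_one_sub_pos (norm_conj_mul_lt_one ha hz)).ne' (by rw [h, zero_re])

theorem norm_discAut_lt_one (hl : ‖lam‖ = 1) (ha : ‖a‖ < 1) (hz : ‖z‖ < 1) :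
    ‖discAut a lam z‖ < 1 := by
  have hden := one_sub_conj_mul_ne_zero ha hz
  have key : ‖1 - conj a * z‖ ^ 2 - ‖z - a‖ ^ 2 = (1 - ‖a‖ ^ 2) * (1 - ‖z‖ ^ 2) := by
    apply ofReal_injective
    push_cast
    simp only [← mul_conj', map_sub, map_mul, map_one, conj_conj]
    ring
  rw [discAut, norm_div, norm_mul, hl, one_mul, div_lt_one (norm_pos_iff.mpr hden),
    ← sq_lt_sq₀ (norm_nonneg _) (norm_nonneg _)]
  nlinarith [mul_pos (by nlinarith [norm_nonneg a] : 0 < 1 - ‖a‖ ^ 2)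
    (by nlinarith [norm_nonneg z] : 0 < 1 - ‖z‖ ^ 2)]

theorem hasDerivAt_discAut (lam : ℂ) (h : 1 - conj a * z ≠ 0) :
    HasDerivAt (discAut a lam) (lam * discAutDeriv a z) z := by
  have hnum : HasDerivAt (fun w => lam * (w - a)) lam z := by
    simpa using ((hasDerivAt_id z).sub_const a).const_mul lam
  have hden : HasDerivAt (fun w => 1 - conj a * w) (-conj a) z := by
    simpa using ((hasDerivAt_id z).const_mul (conj a)).const_sub 1
  refine (hnum.div hden h).congr_deriv ?_
  rw [discAutDeriv, inv_pow, ← div_eq_mul_inv]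
  push_cast
  rw [← conj_mul']
  field_simp
  ring

theorem conj_mul_deriv_discAut (hl : ‖lam‖ = 1) (h : 1 - conj a * z ≠ 0) :
    conj lam * deriv (discAut a lam) z = discAutDeriv a z := by
  rw [(hasDerivAt_discAut lam h).deriv, ← mul_assoc, conj_mul', hl]
  simp

theorem discAutDeriv_mem_slitPlane (ha : ‖a‖ < 1) (hz : ‖z‖ < 1) :
    discAutDeriv a z ∈ slitPlane := by
  refine ofReal_mul_sq_mem_slitPlane (by nlinarith [norm_nonneg a]) ?_
  have hre := re_one_sub_pos (norm_conj_mul_lt_one ha hz)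
  rw [inv_re]
  exact div_pos hre (normSq_pos.mpr (one_sub_conj_mul_ne_zero ha hz))

theorem continuousOn_discAutDeriv (ha : ‖a‖ < 1) :
    ContinuousOn (discAutDeriv a) (ball 0 1) := by
  unfold discAutDeriv
  refine continuousOn_const.mul ((ContinuousOn.inv₀ (by fun_prop) fun z hz => ?_).pow 2)
  exact one_sub_conj_mul_ne_zero ha (mem_ball_zero_iff.mp hz)

theorem mapsTo_discAut (ha : ‖a‖ < 1) (hl : ‖lam‖ = 1) :
    MapsTo (discAut a lam) (ball 0 1) (ball 0 1) := fun z hz => by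
  rw [mem_ball_zero_iff] at hz ⊢
  exact norm_discAut_lt_one hl ha hz

theorem continuousOn_discAut (ha : ‖a‖ < 1) (lam : ℂ) :
    ContinuousOn (discAut a lam) (ball 0 1) := fun _ hz =>
  (hasDerivAt_discAut lam (one_sub_conj_mul_ne_zero ha (mem_ball_zero_iff.mp hz))
    ).continuousAt.continuousWithinAt

end discAut

theorem discAutDeriv_mul_discAutDeriv_discAut {a₁ a₂ lam₁ lam₂ z : ℂ} (ha₁ : ‖a₁‖ < 1)
    (ha₂ : ‖a₂‖ < 1) (hl₁ : ‖lam₁‖ = 1) (hl₂ : ‖lam₂‖ = 1) (hz : ‖z‖ < 1) :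
    discAutDeriv a₁ z * discAutDeriv a₂ (discAut a₁ lam₁ z) =
      conj lam₁ * conj lam₂ * deriv (discAut a₂ lam₂ ∘ discAut a₁ lam₁) z := by
  have hφz := norm_discAut_lt_one hl₁ ha₁ hz
  have hφ := hasDerivAt_discAut lam₁ (one_sub_conj_mul_ne_zero ha₁ hz)
  have hψ := hasDerivAt_discAut lam₂ (one_sub_conj_mul_ne_zero ha₂ hφz)
  rw [← conj_mul_deriv_discAut hl₁ (one_sub_conj_mul_ne_zero ha₁ hz),
    ← conj_mul_deriv_discAut hl₂ (one_sub_conj_mul_ne_zero ha₂ hφz),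
    deriv_comp z hψ.differentiableAt hφ.differentiableAt]
  ring

theorem stmt_1_general (p : ℝ)
    (a₁ a₂ a₃ lam₁ lam₂ lam₃ : ℂ)
    (ha₁ : ‖a₁‖ < 1) (ha₂ : ‖a₂‖ < 1) (ha₃ : ‖a₃‖ < 1)
    (hl₁ : ‖lam₁‖ = 1) (hl₂ : ‖lam₂‖ = 1) (hl₃ : ‖lam₃‖ = 1)
    (φ ψ : ℂ → ℂ)
    (hφ : ∀ z : ℂ, φ z = lam₁ * (z - a₁) / (1 - (starRingEnd ℂ) a₁ * z))
    (hψ : ∀ z : ℂ, ψ z = lam₂ * (z - a₂) / (1 - (starRingEnd ℂ) a₂ * z))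
    (hcomp : ∀ z : ℂ, ‖z‖ < 1 →
      ψ (φ z) = lam₃ * (z - a₃) / (1 - (starRingEnd ℂ) a₃ * z)) :
    ∃ ρ : ℂ, ‖ρ‖ = 1 ∧ ∀ z : ℂ, ‖z‖ < 1 →
      ((starRingEnd ℂ) lam₁ * deriv φ z) ^ (1 / (p : ℂ)) *
          ((starRingEnd ℂ) lam₂ * deriv ψ (φ z)) ^ (1 / (p : ℂ))
        = ρ * ((starRingEnd ℂ) lam₃ * deriv (ψ ∘ φ) z) ^ (1 / (p : ℂ)) := by
  obtain rfl : φ = discAut a₁ lam₁ := funext hφ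
  obtain rfl : ψ = discAut a₂ lam₂ := funext hψ
  have hcomp_deriv : ∀ z, ‖z‖ < 1 →
      conj lam₃ * deriv (discAut a₂ lam₂ ∘ discAut a₁ lam₁) z = discAutDeriv a₃ z := by
    intro z hz
    have hev : discAut a₂ lam₂ ∘ discAut a₁ lam₁ =ᶠ[nhds z] discAut a₃ lam₃ :=
      Filter.eventually_of_mem (isOpen_ball.mem_nhds (mem_ball_zero_iff.mpr hz))
        fun w hw => hcomp w (mem_ball_zero_iff.mp hw)
    rw [hev.deriv_eq, conj_mul_deriv_discAut hl₃ (one_sub_conj_mul_ne_zero ha₃ hz)]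
  have hprod : ∀ z ∈ ball (0 : ℂ) 1, discAutDeriv a₁ z * discAutDeriv a₂ (discAut a₁ lam₁ z) =
      conj lam₁ * conj lam₂ * lam₃ * discAutDeriv a₃ z := fun z hz => by
    rw [mem_ball_zero_iff] at hz
    rw [discAutDeriv_mul_discAutDeriv_discAut ha₁ ha₂ hl₁ hl₂ hz, ← hcomp_deriv z hz,
      mul_assoc _ lam₃, ← mul_assoc lam₃, mul_conj', hl₃]
    simp
  have hmaps := mapsTo_discAut ha₁ hl₁
  obtain ⟨ρ, hρ, hpow⟩ := (convex_ball (0 : ℂ) 1).isPreconnected.exists_cpow_mul_cpow_eq_mul_cpow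
    (continuousOn_discAutDeriv ha₁)
    ((continuousOn_discAutDeriv ha₂).comp (continuousOn_discAut ha₁ lam₁) hmaps)
    (continuousOn_discAutDeriv ha₃)
    (fun z hz => discAutDeriv_mem_slitPlane ha₁ (mem_ball_zero_iff.mp hz))
    (fun z hz => discAutDeriv_mem_slitPlane ha₂ (mem_ball_zero_iff.mp (hmaps hz)))
    (fun z hz => discAutDeriv_mem_slitPlane ha₃ (mem_ball_zero_iff.mp hz)) hprod (1 / p)
  refine ⟨ρ, by simpa [hl₁, hl₂, hl₃] using hρ, fun z hz => ?_⟩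
  rw [conj_mul_deriv_discAut hl₁ (one_sub_conj_mul_ne_zero ha₁ hz),
    conj_mul_deriv_discAut hl₂ (one_sub_conj_mul_ne_zero ha₂ (norm_discAut_lt_one hl₁ ha₁ hz)),
    hcomp_deriv z hz]
  simpa using hpow z (mem_ball_zero_iff.mpr hz)

/-- For disc automorphisms `φ, ψ` with `ψ ∘ φ` written in standard form with
parameters `a₃, λ₃`, there is a unimodular `ρ` with
`(conj λ₁ · φ')^(1/p) · (conj λ₂ · ψ'∘φ)^(1/p) = ρ · (conj λ₃ · (ψ∘φ)')^(1/p)` on the disc,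
where powers are principal branches (`Complex.cpow`). -/
theorem stmt_1 (p : ℝ) (hp : 1 ≤ p)
    (a₁ a₂ a₃ lam₁ lam₂ lam₃ : ℂ)
    (ha₁ : ‖a₁‖ < 1) (ha₂ : ‖a₂‖ < 1) (ha₃ : ‖a₃‖ < 1)
    (hl₁ : ‖lam₁‖ = 1) (hl₂ : ‖lam₂‖ = 1) (hl₃ : ‖lam₃‖ = 1)
    (φ ψ : ℂ → ℂ)
    (hφ : ∀ z : ℂ, φ z = lam₁ * (z - a₁) / (1 - (starRingEnd ℂ) a₁ * z))
    (hψ : ∀ z : ℂ, ψ z = lam₂ * (z - a₂) / (1 - (starRingEnd ℂ) a₂ * z))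
    (hcomp : ∀ z : ℂ, ‖z‖ < 1 →
      ψ (φ z) = lam₃ * (z - a₃) / (1 - (starRingEnd ℂ) a₃ * z)) :
    ∃ ρ : ℂ, ‖ρ‖ = 1 ∧ ∀ z : ℂ, ‖z‖ < 1 →
      ((starRingEnd ℂ) lam₁ * deriv φ z) ^ (1 / (p : ℂ)) *
          ((starRingEnd ℂ) lam₂ * deriv ψ (φ z)) ^ (1 / (p : ℂ))
        = ρ * ((starRingEnd ℂ) lam₃ * deriv (ψ ∘ φ) z) ^ (1 / (p : ℂ)) :=
  stmt_1_general p a₁ a₂ a₃ lam₁ lam₂ lam₃ ha₁ ha₂ ha₃ hl₁ hl₂ hl₃ φ ψ hφ hψ hcomp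
end

section
/- For c ∈ ℂ with |c| = 1 and c ≠ ±1, write φ_c(z) = (1 + c − 2z)/(2c − (1 + c)z), and for real r ∈ (−1,1) write ψ_r(z) = (z − r)/(1 − r z). If Im(c) > 0, then there exists r ∈ (−1,1) such that φ_c(z) = ψ_r(φ_i(ψ_{−r}(z))) for all z ∈ D; if Im(c) < 0, then there exists r ∈ (−1,1) such that φ_c(z) = ψ_r(φ_{−i}(ψ_{−r}(z))) for all z ∈ D. -/
/-!
Conjugating the parabolic map `φ_e` by the real Möbius map `ψ_r` gives again a parabolic map
fixing `1`, namely `ψ_r ∘ φ_e ∘ ψ_{-r} = φ_{ψ_r(e)}`: in homogeneous coordinates both sides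
are the same fractional linear map up to the nonzero factor `(1 - r)(1 - r e)`. So it suffices
to find `r ∈ (-1, 1)` with `ψ_r(i) = c`; solving `c (1 - r i) = i - r` gives
`r = -Re c / (1 + Im c)`, and `|r| < 1` is exactly `Im c > 0` on the unit circle. The case
`Im c < 0` follows by complex conjugation, which commutes with `ψ_r`.
-/

/-- The parabolic automorphism `φ_c(z) = (1 + c − 2z)/(2c − (1 + c)z)` of the unit disc,
fixing `1` (for `c` on the unit circle with `c ≠ ±1`). -/
noncomputable def phiC (c : ℂ) : ℂ → ℂ := fun z => (1 + c - 2 * z) / (2 * c - (1 + c) * z)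

/-- The hyperbolic automorphism `ψ_r(z) = (z − r)/(1 − r z)` of the unit disc, fixing
`−1` and `1` (for real `r ∈ (−1,1)`). -/
noncomputable def psiR (r : ℝ) : ℂ → ℂ := fun z => (z - (r : ℂ)) / (1 - (r : ℂ) * z)

open Complex ComplexConjugate

lemma phiC_div (e a b : ℂ) (hb : b ≠ 0) :
    phiC e (a / b) = ((1 + e) * b - 2 * a) / (2 * e * b - (1 + e) * a) := by
  rw [phiC, ← div_div_div_cancel_right₀ hb ((1 + e) * b - 2 * a)]
  congr 1 <;> field_simp

lemma psiR_div (r : ℝ) (a b : ℂ) (hb : b ≠ 0) :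
    psiR r (a / b) = (a - r * b) / (b - r * a) := by
  rw [psiR, ← div_div_div_cancel_right₀ hb (a - r * b)]
  congr 1 <;> field_simp

lemma psiR_neg_apply (r : ℝ) (z : ℂ) : psiR (-r) z = (z + r) / (1 + r * z) := by
  simp only [psiR, ofReal_neg, sub_neg_eq_add, neg_mul]

lemma psiR_conj (r : ℝ) (z : ℂ) : psiR r (conj z) = conj (psiR r z) := by
  simp [psiR, map_div₀]

lemma one_sub_ofReal_mul_ne_zero {r : ℝ} (hr : |r| < 1) {z : ℂ} (hz : ‖z‖ ≤ 1) :
    1 - r * z ≠ 0 := by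
  intro h
  have h1 : ‖(r : ℂ) * z‖ = 1 := by rw [← sub_eq_zero.mp h, norm_one]
  rw [norm_mul, norm_real, Real.norm_eq_abs] at h1
  nlinarith [abs_nonneg r, norm_nonneg z]

lemma norm_psiR_lt_one {r : ℝ} (hr : |r| < 1) {z : ℂ} (hz : ‖z‖ < 1) : ‖psiR r z‖ < 1 := by
  have hden := one_sub_ofReal_mul_ne_zero hr hz.le
  rw [psiR, norm_div, div_lt_one (norm_pos_iff.mpr hden)]
  have key : ‖1 - r * z‖ ^ 2 - ‖z - r‖ ^ 2 = (1 - r ^ 2) * (1 - ‖z‖ ^ 2) := by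
    simp only [Complex.sq_norm, normSq_apply, sub_re, sub_im, mul_re, mul_im, one_re, one_im,
      ofReal_re, ofReal_im]
    ring
  have hr2 : r ^ 2 < 1 := by nlinarith [abs_nonneg r, sq_abs r]
  have hz2 : ‖z‖ ^ 2 < 1 := by nlinarith [norm_nonneg z]
  exact lt_of_pow_lt_pow_left₀ 2 (norm_nonneg _) (by nlinarith)

lemma two_mul_sub_mul_ne_zero {e w : ℂ} (he : ‖e‖ = 1) (hw : ‖w‖ < 1) :
    2 * e - (1 + e) * w ≠ 0 := by
  intro h
  have h1 : ‖(1 + e) * w‖ = 2 := by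
    rw [← sub_eq_zero.mp h, norm_mul, he]; norm_num
  have h2 : ‖1 + e‖ ≤ 2 := by
    calc ‖1 + e‖ ≤ ‖(1 : ℂ)‖ + ‖e‖ := norm_add_le _ _
      _ = 2 := by rw [norm_one, he]; norm_num
  rw [norm_mul] at h1
  nlinarith [norm_nonneg (1 + e), norm_nonneg w]

theorem psiR_phiC_psiR_neg {e z : ℂ} {r : ℝ} (he : ‖e‖ = 1) (hr : |r| < 1) (hz : ‖z‖ < 1) :
    psiR r (phiC e (psiR (-r) z)) = phiC (psiR r e) z := by
  have hrz : 1 + r * z ≠ 0 := by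
    simpa using one_sub_ofReal_mul_ne_zero (r := -r) (by rwa [abs_neg]) hz.le
  have hre : 1 - r * e ≠ 0 := one_sub_ofReal_mul_ne_zero hr he.le
  have hr1 : (1 : ℂ) - r ≠ 0 := by
    simpa using one_sub_ofReal_mul_ne_zero hr (z := 1) (by simp)
  set c := psiR r e
  have hc : c * (1 - r * e) = e - r := div_mul_cancel₀ _ hre
  set A := (1 + e) * (1 + r * z) - 2 * (z + r)
  set B := 2 * e * (1 + r * z) - (1 + e) * (z + r)
  have hB : B ≠ 0 := by
    have := two_mul_sub_mul_ne_zero he (norm_psiR_lt_one (r := -r) (by rwa [abs_neg]) hz)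
    rw [psiR_neg_apply] at this
    have hB_eq : B = (1 + r * z) * (2 * e - (1 + e) * ((z + r) / (1 + r * z))) := by
      field_simp
      ring
    rw [hB_eq]
    exact mul_ne_zero hrz this
  calc psiR r (phiC e (psiR (-r) z)) = (A - r * B) / (B - r * A) := by
        rw [psiR_neg_apply, phiC_div _ _ _ hrz, psiR_div _ _ _ hB]
    _ = ((1 - r) * (1 - r * e) * (1 + c - 2 * z)) /
          ((1 - r) * (1 - r * e) * (2 * c - (1 + c) * z)) := by
        congr 1
        · linear_combination (-(1 - (r : ℂ))) * hc
        · linear_combination (-(1 - (r : ℂ)) * (2 - z)) * hc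
    _ = phiC c z := mul_div_mul_left _ _ (mul_ne_zero hr1 hre)

lemma exists_psiR_I_eq_of_im_pos {c : ℂ} (hc : ‖c‖ = 1) (him : 0 < c.im) :
    ∃ r : ℝ, |r| < 1 ∧ psiR r I = c := by
  have hns : c.re ^ 2 + c.im ^ 2 = 1 := by
    have := Complex.sq_norm c
    rw [hc, normSq_apply] at this
    linarith
  have hy : 0 < 1 + c.im := by linarith
  set r := -c.re / (1 + c.im) with hr_def
  have hr : r * (1 + c.im) = -c.re := div_mul_cancel₀ _ hy.ne'
  have hr_abs : |r| < 1 := by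
    rw [hr_def, abs_div, abs_of_pos hy, div_lt_one hy, abs_neg, abs_lt]
    constructor <;> nlinarith
  refine ⟨r, hr_abs, ?_⟩
  rw [psiR, div_eq_iff (one_sub_ofReal_mul_ne_zero (z := I) hr_abs (by simp))]
  apply Complex.ext <;>
    simp only [sub_re, sub_im, mul_re, mul_im, one_re, one_im, I_re, I_im, ofReal_re, ofReal_im,
      mul_zero, mul_one, zero_sub, sub_zero, sub_self, add_zero, mul_neg, sub_neg_eq_add]
  · linear_combination -hr
  · exact mul_left_cancel₀ hy.ne' (by linear_combination -hns + c.re * hr)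

theorem stmt_8_general (c : ℂ) (hc : ‖c‖ = 1) :
    (0 < c.im → ∃ r : ℝ, -1 < r ∧ r < 1 ∧ ∀ z : ℂ, ‖z‖ < 1 →
        phiC c z = psiR r (phiC Complex.I (psiR (-r) z))) ∧
    (c.im < 0 → ∃ r : ℝ, -1 < r ∧ r < 1 ∧ ∀ z : ℂ, ‖z‖ < 1 →
        phiC c z = psiR r (phiC (-Complex.I) (psiR (-r) z))) := by
  constructor
  · intro him
    obtain ⟨r, hr, rfl⟩ := exists_psiR_I_eq_of_im_pos hc him
    exact ⟨r, (abs_lt.mp hr).1, (abs_lt.mp hr).2,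
      fun z hz => (psiR_phiC_psiR_neg (by simp) hr hz).symm⟩
  · intro him
    obtain ⟨r, hr, hrc⟩ := exists_psiR_I_eq_of_im_pos (c := conj c) (by simpa) (by simpa using him)
    have hc' : psiR r (-I) = c := by rw [← conj_I, psiR_conj, hrc, conj_conj]
    exact ⟨r, (abs_lt.mp hr).1, (abs_lt.mp hr).2,
      fun z hz => hc' ▸ (psiR_phiC_psiR_neg (by simp) hr hz).symm⟩

/-- For unimodular `c ≠ ±1`: if `Im c > 0` then `φ_c = ψ_r ∘ φ_i ∘ ψ_{−r}` on
`D` for some `r ∈ (−1,1)`; if `Im c < 0` then `φ_c = ψ_r ∘ φ_{−i} ∘ ψ_{−r}` on `D` for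
some `r ∈ (−1,1)`. -/
theorem stmt_8 (c : ℂ) (hc : ‖c‖ = 1) (hc1 : c ≠ 1) (hc2 : c ≠ -1) :
    (0 < c.im → ∃ r : ℝ, -1 < r ∧ r < 1 ∧ ∀ z : ℂ, ‖z‖ < 1 →
        phiC c z = psiR r (phiC Complex.I (psiR (-r) z))) ∧
    (c.im < 0 → ∃ r : ℝ, -1 < r ∧ r < 1 ∧ ∀ z : ℂ, ‖z‖ < 1 →
        phiC c z = psiR r (phiC (-Complex.I) (psiR (-r) z))) :=
  stmt_8_general c hc
end

section
/- Every parabolic automorphism φ of D is conjugate in the automorphism group to φ_i or to φ_{−i}: there exists an automorphism η of D such that φ(z) = η(φ_i(η₋₁(z))) for all z ∈ D, or φ(z) = η(φ_{−i}(η₋₁(z))) for all z ∈ D. -/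
/-!
Write `φ z = λ (z - a) / (1 - conj a * z)`. Its fixed points are the roots of
`conj a * z ^ 2 + (λ - 1) * z - λ * a`, whose product has modulus one, so the fixed point `w` on the
circle is unique only if it is a double root: `(λ - 1) * w = 2 * λ * a`. Writing
`λ = (1 + i t) / (1 - i t)` with real `t ≠ 0`, this says that `φ` is `parabolicShift t`, a
translation `v ↦ v - 2 i t` in the half-plane coordinate `v = (1 + z) / (1 - z)`, conjugated by the
rotation `z ↦ w z`. The dilation `v ↦ |t| v` conjugates `parabolicShift (±1) = φ_{±i}` to
`parabolicShift t`.
-/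

/-- A (holomorphic) automorphism of the open unit disc `D = {z : |z| < 1}`:
a map of the form `z ↦ λ(z − a)/(1 − conj(a)·z)` with `a ∈ D` and `|λ| = 1`. -/
def IsDiscAut (φ : ℂ → ℂ) : Prop :=
  ∃ a lam : ℂ, ‖a‖ < 1 ∧ ‖lam‖ = 1 ∧
    ∀ z : ℂ, φ z = lam * (z - a) / (1 - (starRingEnd ℂ) a * z)

/-- An elliptic automorphism: `φ ≠ id` with a fixed point in the open disc. -/
def IsEllipticAut (φ : ℂ → ℂ) : Prop :=
  IsDiscAut φ ∧ φ ≠ id ∧ ∃ a : ℂ, ‖a‖ < 1 ∧ φ a = a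

/-- A parabolic automorphism: `φ ≠ id` with exactly one fixed point in the closed disc,
lying on the unit circle. -/
def IsParabolicAut (φ : ℂ → ℂ) : Prop :=
  IsDiscAut φ ∧ φ ≠ id ∧ ∃ w : ℂ, ‖w‖ = 1 ∧
    {z : ℂ | ‖z‖ ≤ 1 ∧ φ z = z} = {w}

/-- A hyperbolic automorphism: `φ ≠ id` with exactly two fixed points in the closed disc,
both on the unit circle. -/
def IsHyperbolicAut (φ : ℂ → ℂ) : Prop :=
  IsDiscAut φ ∧ φ ≠ id ∧ ∃ w₁ w₂ : ℂ, w₁ ≠ w₂ ∧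
    ‖w₁‖ = 1 ∧ ‖w₂‖ = 1 ∧
    {z : ℂ | ‖z‖ ≤ 1 ∧ φ z = z} = {w₁, w₂}

open Complex ComplexConjugate

noncomputable def moebius (p q r s z : ℂ) : ℂ := (p * z + q) / (r * z + s)

lemma moebius_moebius {p q r s p' q' r' s' z : ℂ} (hz : r' * z + s' ≠ 0) :
    moebius p q r s (moebius p' q' r' s' z) =
      moebius (p * p' + q * r') (p * q' + q * s') (r * p' + s * r') (r * q' + s * s') z := by
  have key (x y : ℂ) : x * moebius p' q' r' s' z + y =
      ((x * p' + y * r') * z + (x * q' + y * s')) / (r' * z + s') := by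
    rw [moebius, mul_div_assoc', div_add' _ _ _ hz]; ring
  rw [moebius, key, key, div_div_div_cancel_right₀ hz, moebius]

lemma moebius_mul {p q r s μ : ℂ} (hμ : μ ≠ 0) (z : ℂ) :
    moebius (μ * p) (μ * q) (μ * r) (μ * s) z = moebius p q r s z := by
  rw [moebius, moebius, ← mul_div_mul_left (p * z + q) (r * z + s) hμ]
  congr 1 <;> ring

lemma one_sub_mul_ne_zero {x y : ℂ} (hx : ‖x‖ < 1) (hy : ‖y‖ ≤ 1) : 1 - x * y ≠ 0 := by
  intro h
  have : ‖x * y‖ < 1 := by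
    rw [norm_mul]; exact lt_of_le_of_lt (mul_le_of_le_one_right (norm_nonneg x) hy) hx
  rw [← sub_eq_zero.mp h, norm_one] at this
  exact lt_irrefl 1 this

lemma IsDiscAut.norm_lt_one {f : ℂ → ℂ} (hf : IsDiscAut f) {z : ℂ} (hz : ‖z‖ < 1) :
    ‖f z‖ < 1 := by
  obtain ⟨a, l, ha, hl, hf⟩ := hf
  have hd : 1 - conj a * z ≠ 0 := one_sub_mul_ne_zero (by rwa [norm_conj]) hz.le
  rw [hf, norm_div, norm_mul, hl, one_mul, div_lt_one (norm_pos_iff.mpr hd),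
    ← sq_lt_sq₀ (norm_nonneg _) (norm_nonneg _), Complex.sq_norm, Complex.sq_norm]
  have ha' : normSq a < 1 := by rw [normSq_eq_norm_sq]; nlinarith [norm_nonneg a]
  have hz' : normSq z < 1 := by rw [normSq_eq_norm_sq]; nlinarith [norm_nonneg z]
  have pick : normSq (1 - conj a * z) - normSq (z - a) = (1 - normSq a) * (1 - normSq z) := by
    simp only [normSq_apply, sub_re, sub_im, mul_re, mul_im, one_re, one_im, conj_re, conj_im]
    ring
  nlinarith

lemma mul_conj_eq_one {w : ℂ} (hw : ‖w‖ = 1) : w * conj w = 1 := by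
  rw [mul_conj, normSq_eq_norm_sq, hw]; norm_num

lemma IsDiscAut.const_mul {f : ℂ → ℂ} (hf : IsDiscAut f) {w : ℂ} (hw : ‖w‖ = 1) :
    IsDiscAut fun z => w * f z := by
  obtain ⟨a, l, ha, hl, hf⟩ := hf
  refine ⟨a, w * l, ha, by rw [norm_mul, hw, hl, one_mul], fun z => ?_⟩
  dsimp only
  rw [hf z, mul_div_assoc', mul_assoc]

lemma IsDiscAut.comp_const_mul {f : ℂ → ℂ} (hf : IsDiscAut f) {w : ℂ} (hw : ‖w‖ = 1) :
    IsDiscAut fun z => f (w * z) := by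
  obtain ⟨a, l, ha, hl, hf⟩ := hf
  refine ⟨conj w * a, l * w, by rwa [norm_mul, norm_conj, hw, one_mul],
    by rw [norm_mul, hw, hl, one_mul], fun z => ?_⟩
  have hww := mul_conj_eq_one hw
  dsimp only
  rw [hf (w * z), map_mul, conj_conj]
  congr 1
  · linear_combination (l * a) * hww
  · ring

/- In the coordinate `v = (1 + z) / (1 - z)` on the right half-plane, `hyperbolicScaling k` is
`v ↦ k v` and `parabolicShift t` is `v ↦ v - 2 i t`. -/
noncomputable def hyperbolicScaling (k : ℝ) : ℂ → ℂ := moebius (k + 1) (k - 1) (k - 1) (k + 1)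

noncomputable def parabolicShift (t : ℝ) : ℂ → ℂ :=
  moebius (1 + I * t) (-(I * t)) (I * t) (1 - I * t)

lemma hyperbolicScaling_denom_ne_zero {k : ℝ} (hk : 0 < k) {z : ℂ} (hz : ‖z‖ < 1) :
    (k - 1 : ℂ) * z + (k + 1) ≠ 0 := by
  intro h
  have hnorm : ‖(k - 1 : ℂ) * z‖ = k + 1 := by
    rw [eq_neg_of_add_eq_zero_left h, norm_neg, ← ofReal_one, ← ofReal_add, norm_real,
      Real.norm_of_nonneg (by linarith)]
  rw [norm_mul, ← ofReal_one, ← ofReal_sub, norm_real, Real.norm_eq_abs] at hnorm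
  have : |k - 1| * ‖z‖ < k + 1 := by
    calc |k - 1| * ‖z‖ ≤ |k - 1| := mul_le_of_le_one_right (abs_nonneg _) hz.le
      _ < k + 1 := by rw [abs_lt]; constructor <;> linarith
  linarith

lemma parabolicShift_denom_ne_zero (t : ℝ) {z : ℂ} (hz : ‖z‖ < 1) :
    I * t * z + (1 - I * t) ≠ 0 := by
  intro h
  have hre := congrArg re h
  have him := congrArg im h
  simp only [add_re, add_im, mul_re, mul_im, sub_re, sub_im, I_re, I_im, ofReal_re, ofReal_im,
    one_re, one_im, zero_re, zero_im] at hre him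
  have ht : t ≠ 0 := by rintro rfl; norm_num at hre
  have hzre : z.re = 1 := by
    have : t * (z.re - 1) = 0 := by linarith
    rcases mul_eq_zero.mp this with h | h
    · exact absurd h ht
    · linarith
  linarith [abs_re_le_norm z, le_abs_self z.re]

lemma isDiscAut_hyperbolicScaling {k : ℝ} (hk : 0 < k) : IsDiscAut (hyperbolicScaling k) := by
  have hk1 : 0 < 1 + k := by linarith
  refine ⟨((1 - k) / (1 + k) : ℝ), 1, ?_, norm_one, fun z => ?_⟩
  · rw [norm_real, Real.norm_eq_abs, abs_lt, lt_div_iff₀ hk1, div_lt_one hk1]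
    constructor <;> linarith
  · have hμ : (k + 1 : ℂ) ≠ 0 := by exact_mod_cast (by linarith : k + 1 ≠ 0)
    have ha : (k + 1 : ℂ) * ((1 - k) / (1 + k) : ℝ) = 1 - k := by
      have : (1 + k : ℂ) ≠ 0 := by rwa [add_comm]
      push_cast; field_simp; ring
    rw [conj_ofReal, hyperbolicScaling, moebius, one_mul, eq_comm, ← mul_div_mul_left _ _ hμ]
    congr 1
    · linear_combination -ha
    · linear_combination -z * ha

lemma hyperbolicScaling_hyperbolicScaling_inv {k : ℝ} (hk : 0 < k) {z : ℂ} (hz : ‖z‖ < 1) :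
    hyperbolicScaling k (hyperbolicScaling k⁻¹ z) = z := by
  have hk0 : (k : ℂ) ≠ 0 := by exact_mod_cast hk.ne'
  rw [hyperbolicScaling, hyperbolicScaling,
    moebius_moebius (by exact_mod_cast hyperbolicScaling_denom_ne_zero (inv_pos.2 hk) hz)]
  calc _ = moebius 4 0 0 4 z := by
        push_cast
        congr 1 <;> field_simp <;> ring
    _ = z := by simp [moebius]

lemma hyperbolicScaling_parabolicShift {k : ℝ} (hk : 0 < k) (s : ℝ) {u : ℂ} (hu : ‖u‖ < 1) :
    hyperbolicScaling k (parabolicShift s u) = parabolicShift (k * s) (hyperbolicScaling k u) := by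
  rw [hyperbolicScaling, parabolicShift, parabolicShift,
    moebius_moebius (parabolicShift_denom_ne_zero s hu),
    moebius_moebius (hyperbolicScaling_denom_ne_zero hk hu)]
  push_cast
  congr 1 <;> ring

lemma phiC_eq_parabolicShift {s : ℝ} (hs : s ^ 2 = 1) : phiC (I * s) = parabolicShift s := by
  have hc : (I * s) ^ 2 = -1 := by
    rw [mul_pow, I_sq, ← ofReal_pow, hs, ofReal_one, neg_one_mul]
  have hμ : I * s - 1 ≠ 0 := by
    intro h
    have := congrArg re h
    simp at this
  funext u
  rw [parabolicShift, ← moebius_mul hμ, phiC, moebius]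
  congr 1 <;> linear_combination (1 - u) * hc

lemma exists_conj_parabolicShift {w : ℂ} (hw : ‖w‖ = 1) {k : ℝ} (hk : 0 < k) (s : ℝ) :
    ∃ η ηinv : ℂ → ℂ, IsDiscAut η ∧ IsDiscAut ηinv ∧
      (∀ z : ℂ, ‖z‖ < 1 → η (ηinv z) = z ∧ ηinv (η z) = z) ∧
      ∀ z : ℂ, ‖z‖ < 1 → w * parabolicShift (k * s) (conj w * z) = η (parabolicShift s (ηinv z)) := by
  have hw' : ‖conj w‖ = 1 := by rwa [norm_conj]
  have hww := mul_conj_eq_one hw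
  have hψ := isDiscAut_hyperbolicScaling hk
  have hψinv := isDiscAut_hyperbolicScaling (inv_pos.2 hk)
  have hwz {z : ℂ} (hz : ‖z‖ < 1) : ‖conj w * z‖ < 1 := by rwa [norm_mul, hw', one_mul]
  refine ⟨fun z => w * hyperbolicScaling k z, fun z => hyperbolicScaling k⁻¹ (conj w * z),
    hψ.const_mul hw, hψinv.comp_const_mul hw', fun z hz => ⟨?_, ?_⟩, fun z hz => ?_⟩
  · dsimp only
    rw [hyperbolicScaling_hyperbolicScaling_inv hk (hwz hz), ← mul_assoc, hww, one_mul]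
  · dsimp only
    rw [← mul_assoc, mul_comm (conj w), hww, one_mul]
    simpa using hyperbolicScaling_hyperbolicScaling_inv (inv_pos.2 hk) hz
  · dsimp only
    rw [hyperbolicScaling_parabolicShift hk s (hψinv.norm_lt_one (hwz hz)),
      hyperbolicScaling_hyperbolicScaling_inv hk (hwz hz)]

lemma discAut_apply_eq_self_iff {a l z : ℂ} (ha : ‖a‖ < 1) (hz : ‖z‖ ≤ 1) :
    l * (z - a) / (1 - conj a * z) = z ↔ conj a * z ^ 2 + (l - 1) * z - l * a = 0 := by
  rw [div_eq_iff (one_sub_mul_ne_zero (by rwa [norm_conj]) hz)]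
  constructor <;> intro h <;> linear_combination h

lemma sub_one_mul_eq_of_unique_root {a l w : ℂ} (ha0 : a ≠ 0) (hl : ‖l‖ = 1) (hw : ‖w‖ = 1)
    (hroot : conj a * w ^ 2 + (l - 1) * w - l * a = 0)
    (huniq : ∀ z : ℂ, ‖z‖ ≤ 1 → conj a * z ^ 2 + (l - 1) * z - l * a = 0 → z = w) :
    (l - 1) * w = 2 * l * a := by
  have hw0 : w ≠ 0 := norm_ne_zero_iff.1 (by simp [hw])
  have hb : conj a * w ≠ 0 := mul_ne_zero ((map_ne_zero _).2 ha0) hw0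
  -- By Vieta, the other root is `-l a / (ā w)`; it lies on the unit circle, so it is `w` again.
  obtain ⟨w', hw'_def⟩ : ∃ w', w' = -(l * a) / (conj a * w) := ⟨_, rfl⟩
  have hw'w : conj a * w * w' = -(l * a) := by rw [hw'_def, mul_div_cancel₀ _ hb]
  have hw'_norm : ‖w'‖ = 1 := by
    rw [hw'_def, norm_div, norm_neg, norm_mul, norm_mul, norm_conj, hl, hw, one_mul, mul_one,
      div_self (norm_ne_zero_iff.2 ha0)]
  have hw' : w' = w := huniq w' hw'_norm.le <| by
    apply mul_left_cancel₀ (mul_ne_zero hb hw0)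
    linear_combination (w * (conj a * w' + l - 1) - l * a) * hw'w - l * a * hroot
  rw [hw'] at hw'w
  linear_combination hroot - hw'w

lemma exists_real_mul_one_sub_I_mul_eq {l : ℂ} (hl : ‖l‖ = 1) (hl1 : l ≠ -1) :
    ∃ t : ℝ, l * (1 - I * t) = 1 + I * t := by
  have hsq : l.re ^ 2 + l.im ^ 2 = 1 := by
    rw [← normSq_add_mul_I l.re l.im, re_add_im, normSq_eq_norm_sq, hl, one_pow]
  have hre : 1 + l.re ≠ 0 := by
    intro h
    apply hl1
    apply Complex.ext <;> simp <;> nlinarith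
  refine ⟨l.im / (1 + l.re), Complex.ext ?_ ?_⟩ <;>
    simp only [mul_re, mul_im, sub_re, sub_im, add_re, add_im, one_re, one_im, I_re, I_im,
      ofReal_re, ofReal_im] <;> field_simp <;> nlinarith

lemma discAut_eq_mul_parabolicShift {a l w : ℂ} {t : ℝ} (hw : ‖w‖ = 1)
    (hrel : (l - 1) * w = 2 * l * a) (ht : l * (1 - I * t) = 1 + I * t) (z : ℂ) :
    l * (z - a) / (1 - conj a * z) = w * parabolicShift t (conj w * z) := by
  have hww := mul_conj_eq_one hw
  have hrel' : (conj l - 1) * conj w = 2 * conj l * conj a := by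
    simpa [map_ofNat] using congrArg conj hrel
  have ht' : conj l * (1 + I * t) = 1 - I * t := by
    simpa [sub_eq_add_neg] using congrArg conj ht
  have hμ : (1 - I * t : ℂ) ≠ 0 := by
    intro h
    simpa using congrArg re h
  rw [parabolicShift, moebius, mul_div_assoc', ← mul_div_mul_left (l * (z - a)) _ hμ]
  congr 1
  · linear_combination (z - w / 2) * ht + (1 - I * t) / 2 * hrel - (1 + I * t) * z * hww
  · linear_combination -z * ((conj w - 2 * conj a) * ht' - (1 + I * t) * hrel') / 2

lemma IsParabolicAut.exists_eq_mul_parabolicShift {φ : ℂ → ℂ} (hφ : IsParabolicAut φ) :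
    ∃ w : ℂ, ‖w‖ = 1 ∧ ∃ t : ℝ, t ≠ 0 ∧ ∀ z : ℂ, φ z = w * parabolicShift t (conj w * z) := by
  obtain ⟨⟨a, l, ha, hl, hφ⟩, -, w, hw, hfix⟩ := hφ
  have hmem {z : ℂ} : ‖z‖ ≤ 1 ∧ φ z = z ↔ z = w := by
    rw [← Set.mem_singleton_iff (a := z), ← hfix]; rfl
  have hroot_iff {z : ℂ} (hz : ‖z‖ ≤ 1) : φ z = z ↔ conj a * z ^ 2 + (l - 1) * z - l * a = 0 := by
    rw [hφ]; exact discAut_apply_eq_self_iff ha hz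
  have hroot : conj a * w ^ 2 + (l - 1) * w - l * a = 0 :=
    (hroot_iff hw.le).1 (hmem.2 rfl).2
  have ha0 : a ≠ 0 := by
    rintro rfl
    have h0 : (0 : ℂ) = w := hmem.1 ⟨by simp, by simp [hφ]⟩
    simp [← h0] at hw
  have hrel : (l - 1) * w = 2 * l * a :=
    sub_one_mul_eq_of_unique_root ha0 hl hw hroot fun z hz hz' => hmem.1 ⟨hz, (hroot_iff hz).2 hz'⟩
  have hl1 : l ≠ -1 := by
    rintro rfl
    have : w = a := by linear_combination -hrel / 2
    exact ha.ne (this ▸ hw)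
  obtain ⟨t, ht⟩ := exists_real_mul_one_sub_I_mul_eq hl hl1
  refine ⟨w, hw, t, ?_, fun z => by rw [hφ, discAut_eq_mul_parabolicShift hw hrel ht]⟩
  rintro rfl
  have hl : l = 1 := by simpa using ht
  exact ha0 (by simpa [hl] using hrel.symm)

/-- Every parabolic automorphism `φ` of the disc is conjugate in the
automorphism group to `φ_i` or to `φ_{−i}`: there is an automorphism `η` (with
compositional inverse `ηinv`) such that `φ = η ∘ φ_i ∘ ηinv` on `D` or
`φ = η ∘ φ_{−i} ∘ ηinv` on `D`. -/
theorem stmt_11 (φ : ℂ → ℂ) (hφ : IsParabolicAut φ) :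
    ∃ η ηinv : ℂ → ℂ, IsDiscAut η ∧ IsDiscAut ηinv ∧
      (∀ z : ℂ, ‖z‖ < 1 → η (ηinv z) = z ∧ ηinv (η z) = z) ∧
      ((∀ z : ℂ, ‖z‖ < 1 → φ z = η (phiC Complex.I (ηinv z))) ∨
       (∀ z : ℂ, ‖z‖ < 1 → φ z = η (phiC (-Complex.I) (ηinv z)))) := by
  obtain ⟨w, hw, t, ht, hφt⟩ := hφ.exists_eq_mul_parabolicShift
  rcases ht.lt_or_gt with ht | ht
  · obtain ⟨η, ηinv, hη, hηinv, hinv, hconj⟩ := exists_conj_parabolicShift hw (neg_pos.2 ht) (-1)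
    have hc : phiC (-I) = parabolicShift (-1) := by
      simpa using phiC_eq_parabolicShift (s := -1) (by norm_num)
    refine ⟨η, ηinv, hη, hηinv, hinv, Or.inr fun z hz => ?_⟩
    rw [hφt, hc, ← hconj z hz, neg_mul_neg, mul_one]
  · obtain ⟨η, ηinv, hη, hηinv, hinv, hconj⟩ := exists_conj_parabolicShift hw ht 1
    have hc : phiC I = parabolicShift 1 := by
      simpa using phiC_eq_parabolicShift (s := 1) (by norm_num)
    refine ⟨η, ηinv, hη, hηinv, hinv, Or.inl fun z hz => ?_⟩
    rw [hφt, hc, ← hconj z hz, mul_one]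
end

section
/- Let φ_i(z) = (1 + i − 2z)/(2i − (1 + i)z) and φ_{−i}(z) = (1 − i − 2z)/(−2i − (1 − i)z). For n ≥ 1 the points a_n = n/(n − i) and a'_n = n/(n + i) lie in D and satisfy φ_i^[n](a_n) = 0 and φ_{−i}^[n](a'_n) = 0, and both (a_n) and (a'_n) are Blaschke sequences: ∑_{n=1}^∞ (1 − |a_n|) < ∞ and ∑_{n=1}^∞ (1 − |a'_n|) < ∞. -/
open Complex

section
variable {c : ℂ}

lemma ofReal_sub_ne_zero_of_sq_eq_neg_one (hc : c ^ 2 = -1) (x : ℝ) : (x : ℂ) - c ≠ 0 := by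
  intro h
  have hx : ((x ^ 2 : ℝ) : ℂ) = ((-1 : ℝ) : ℂ) := by
    push_cast; rwa [← sub_eq_zero.1 h] at hc
  nlinarith [sq_nonneg x, ofReal_injective hx]

lemma semiconj_phiC (hc : c ^ 2 = -1) :
    Function.Semiconj (fun x : ℝ => (x : ℂ) / (x - c)) (· + -1) (phiC c) := by
  intro x
  have h₀ := ofReal_sub_ne_zero_of_sq_eq_neg_one hc x
  have h₁ := ofReal_sub_ne_zero_of_sq_eq_neg_one hc (x + -1)
  have hc₁ : c - 1 ≠ 0 := fun h => by rw [sub_eq_zero.1 h] at hc; norm_num at hc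
  push_cast at h₁ ⊢
  have hden : 2 * c * (x - c) - (1 + c) * x = (c - 1) * (x + -1 - c) := by
    linear_combination (-1) * hc
  unfold phiC
  rw [← mul_div_assoc, ← mul_div_assoc, sub_div' h₀, sub_div' h₀, div_div_div_cancel_right₀ h₀,
    hden, div_eq_div_iff h₁ (mul_ne_zero hc₁ h₁)]
  linear_combination (x - 1 - c) * hc

lemma phiC_iterate_div_ofReal_sub (hc : c ^ 2 = -1) (x : ℝ) (n : ℕ) :
    (phiC c)^[n] (x / (x - c)) = (x - n : ℝ) / ((x - n : ℝ) - c) := by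
  simpa [add_right_iterate_apply, sub_eq_add_neg] using ((semiconj_phiC hc).iterate_right n x).symm

lemma phiC_iterate_natCast_div (hc : c ^ 2 = -1) (n : ℕ) :
    (phiC c)^[n] (n / (n - c)) = 0 := by
  simpa using phiC_iterate_div_ofReal_sub hc n n

lemma norm_ofReal_sub_sq (hc : c ^ 2 = -1) (x : ℝ) : ‖(x : ℂ) - c‖ ^ 2 = x ^ 2 + 1 := by
  obtain rfl | rfl : c = I ∨ c = -I := sq_eq_sq_iff_eq_or_eq_neg.1 (hc.trans I_sq.symm)
  all_goals rw [← normSq_eq_norm_sq, normSq_apply]; simp; ring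

lemma norm_ofReal_div_sub_sq (hc : c ^ 2 = -1) (x : ℝ) :
    ‖(x : ℂ) / (x - c)‖ ^ 2 = x ^ 2 / (x ^ 2 + 1) := by
  rw [norm_div, div_pow, norm_ofReal_sub_sq hc, norm_real, Real.norm_eq_abs, sq_abs]

lemma norm_ofReal_div_sub_lt_one (hc : c ^ 2 = -1) (x : ℝ) : ‖(x : ℂ) / (x - c)‖ < 1 := by
  rw [← sq_lt_one_iff₀ (norm_nonneg _), norm_ofReal_div_sub_sq hc, div_lt_one (by positivity)]
  linarith

lemma one_sub_norm_ofReal_div_sub_le (hc : c ^ 2 = -1) (x : ℝ) :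
    1 - ‖(x : ℂ) / (x - c)‖ ≤ 1 / (x ^ 2 + 1) := by
  have hsq : 1 - ‖(x : ℂ) / (x - c)‖ ^ 2 = 1 / (x ^ 2 + 1) := by
    rw [norm_ofReal_div_sub_sq hc]; field_simp; ring
  nlinarith [norm_nonneg ((x : ℂ) / (x - c)), norm_ofReal_div_sub_lt_one hc x]

lemma summable_one_sub_norm_natCast_div_sub (hc : c ^ 2 = -1) :
    Summable fun n : ℕ => 1 - ‖(n : ℂ) / (n - c)‖ := by
  refine .of_norm_bounded_eventually_nat (Real.summable_one_div_nat_pow.2 one_lt_two) ?_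
  filter_upwards [Filter.eventually_gt_atTop 0] with n hn
  have hlt := norm_ofReal_div_sub_lt_one hc n
  have hle := one_sub_norm_ofReal_div_sub_le hc n
  push_cast at hlt hle
  rw [Real.norm_of_nonneg (by linarith)]
  exact hle.trans (one_div_le_one_div_of_le (by positivity) (by linarith))

end

/-- For `n ≥ 1`, `a_n = n/(n − i)` and `a'_n = n/(n + i)` lie in `D`, satisfy
`φ_i^[n](a_n) = 0` and `φ_{−i}^[n](a'_n) = 0`, and both `(a_n)` and `(a'_n)` are Blaschke
sequences. -/
theorem stmt_13 :
    (∀ n : ℕ, 1 ≤ n →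
      ‖(n : ℂ) / ((n : ℂ) - Complex.I)‖ < 1 ∧
      ‖(n : ℂ) / ((n : ℂ) + Complex.I)‖ < 1 ∧
      (phiC Complex.I)^[n] ((n : ℂ) / ((n : ℂ) - Complex.I)) = 0 ∧
      (phiC (-Complex.I))^[n] ((n : ℂ) / ((n : ℂ) + Complex.I)) = 0) ∧
    Summable (fun n : ℕ => 1 - ‖(n : ℂ) / ((n : ℂ) - Complex.I)‖) ∧
    Summable (fun n : ℕ => 1 - ‖(n : ℂ) / ((n : ℂ) + Complex.I)‖) := by
  have hI : I ^ 2 = -1 := I_sq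
  have hnegI : (-I) ^ 2 = -1 := by rw [neg_sq, I_sq]
  simp only [← sub_neg_eq_add _ I]
  refine ⟨fun n _ => ⟨?_, ?_, phiC_iterate_natCast_div hI n, phiC_iterate_natCast_div hnegI n⟩,
    summable_one_sub_norm_natCast_div_sub hI, summable_one_sub_norm_natCast_div_sub hnegI⟩
  · exact_mod_cast norm_ofReal_div_sub_lt_one hI n
  · exact_mod_cast norm_ofReal_div_sub_lt_one hnegI n
end
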